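/- arXiv:2312.00295 — 4 statements merged into one kernel-verified Lean document; each statement's English description precedes it below -/
import Mathlib

section
/- For every natural number n ≥ 1 and every real x that is not a nonpositive integer in {0, -1, ..., -n}, one has 1/(x(x+1)···(x+n))^2 = ∑_{k=0}^{n} a_k/(x+k) + ∑_{k=0}^{n} b_k/(x+k)^2, where a_k = 2(H_k - H_{n-k})/(k!(n-k)!)^2 and b_k = 1/(k!(n-k)!)^2. -/
/-!
Put `P = ∏ₖ (X + k)`, `Qₖ = P / (X + k)`, `wₖ = 1 / Qₖ(-k)` and `σₖ = Qₖ'(-k) / Qₖ(-k)`.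
The Hermite basis polynomials `Hₖ = wₖ² Qₖ² (1 - 2 σₖ (X + k))` take the value `δⱼₖ` and have
vanishing derivative at every node `-j`, so `∑ₖ Hₖ - 1` has `n + 1` double roots but degree at most
`2n + 1`; hence `∑ₖ Hₖ = 1`. Dividing by `P(x)²` gives the partial fraction decomposition with
coefficients `wₖ²` and `-2 wₖ² σₖ`, and for the nodes `0, -1, …, -n` one computes
`wₖ² = 1 / (k! (n - k)!)²` and `σₖ = H_{n-k} - H_k`.
-/

open Polynomial Finset

namespace Lagrange

variable {F : Type*} [Field F] {ι : Type*} {s : Finset ι} {v : ι → F}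

theorem eval_derivative_nodal_not_at_node [DecidableEq ι] {x : F} (hx : ∀ i ∈ s, x ≠ v i) :
    eval x (derivative (nodal s v)) = (∑ i ∈ s, (x - v i)⁻¹) * eval x (nodal s v) := by
  rw [derivative_nodal, eval_finsetSum, sum_mul]
  refine sum_congr rfl fun i hi => ?_
  have hxi : x - v i ≠ 0 := sub_ne_zero.mpr (hx i hi)
  rw [nodal_eq_mul_nodal_erase hi, eval_mul, eval_sub, eval_X, eval_C, inv_mul_cancel_left₀ hxi]

theorem eq_zero_of_natDegree_lt_of_eval_eq_zero_of_eval_derivative_eq_zero (hvs : Set.InjOn v s)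
    {p : F[X]} (hp : p.natDegree < 2 * #s) (h0 : ∀ i ∈ s, p.eval (v i) = 0)
    (h1 : ∀ i ∈ s, (derivative p).eval (v i) = 0) : p = 0 := by
  by_contra hp0
  have hdvd : nodal s v ^ 2 ∣ p := by
    rw [nodal, ← prod_pow]
    refine prod_dvd_of_coprime (fun i hi j hj hij => ?_) fun i hi => ?_
    · exact (isCoprime_X_sub_C_of_isUnit_sub
        (sub_ne_zero.mpr fun h => hij (hvs hi hj h)).isUnit).pow
    · exact (le_rootMultiplicity_iff hp0).mp
        ((one_lt_rootMultiplicity_iff_isRoot hp0).mpr ⟨h0 i hi, h1 i hi⟩)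
  have := natDegree_le_of_dvd hdvd hp0
  rw [natDegree_pow, natDegree_nodal] at this
  omega

variable [DecidableEq ι]

noncomputable def hermiteBasis (s : Finset ι) (v : ι → F) (i : ι) : F[X] :=
  C (nodalWeight s v i ^ 2) * nodal (s.erase i) v ^ 2 *
    (1 - C (2 * ∑ j ∈ s.erase i, (v i - v j)⁻¹) * (X - C (v i)))

variable {i j : ι}

theorem eval_hermiteBasis_of_ne (hij : i ≠ j) (hj : j ∈ s) :
    eval (v j) (hermiteBasis s v i) = 0 := by
  have := eval_nodal_at_node (v := v) (mem_erase.mpr ⟨hij.symm, hj⟩)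
  simp [hermiteBasis, this]

theorem eval_derivative_hermiteBasis_of_ne (hij : i ≠ j) (hj : j ∈ s) :
    eval (v j) (derivative (hermiteBasis s v i)) = 0 := by
  have := eval_nodal_at_node (v := v) (mem_erase.mpr ⟨hij.symm, hj⟩)
  simp only [hermiteBasis, derivative_mul, derivative_sq, eval_add, eval_mul, eval_pow, this]
  ring

theorem eval_hermiteBasis_self (hvs : Set.InjOn v s) (hi : i ∈ s) :
    eval (v i) (hermiteBasis s v i) = 1 := by
  have hQ : eval (v i) (nodal (s.erase i) v) ≠ 0 := by
    simpa [nodalWeight_eq_eval_nodal_erase_inv] using nodalWeight_ne_zero hvs hi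
  simp only [hermiteBasis, nodalWeight_eq_eval_nodal_erase_inv, eval_mul, eval_pow, eval_C,
    eval_sub, eval_one, eval_X, sub_self, mul_zero, sub_zero, mul_one]
  field_simp

theorem eval_derivative_hermiteBasis_self (hvs : Set.InjOn v s) (hi : i ∈ s) :
    eval (v i) (derivative (hermiteBasis s v i)) = 0 := by
  have hlog := eval_derivative_nodal_not_at_node (s := s.erase i) (v := v) (x := v i)
    fun j hj h => (mem_erase.mp hj).1 (hvs hi (mem_of_mem_erase hj) h).symm
  simp only [hermiteBasis, derivative_mul, derivative_sq, derivative_C, derivative_sub,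
    derivative_one, derivative_X, eval_add, eval_mul, eval_sub, eval_C, eval_X, eval_one,
    eval_zero, eval_pow, hlog]
  ring

theorem natDegree_hermiteBasis_lt (hi : i ∈ s) :
    (hermiteBasis s v i).natDegree < 2 * #s := by
  have hcard := card_erase_add_one hi
  have hQ : (nodal (s.erase i) v ^ 2).natDegree = 2 * (#s - 1) := by
    rw [natDegree_pow, natDegree_nodal, card_erase_of_mem hi]
  have hL : (1 - C (2 * ∑ j ∈ s.erase i, (v i - v j)⁻¹) * (X - C (v i))).natDegree ≤ 1 := by
    compute_degree
  unfold hermiteBasis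
  calc _ ≤ (nodal (s.erase i) v ^ 2).natDegree + 1 :=
        (natDegree_mul_le_of_le (natDegree_C_mul_le _ _) hL)
    _ < 2 * #s := by omega

theorem sum_hermiteBasis (hvs : Set.InjOn v s) (hs : s.Nonempty) :
    ∑ i ∈ s, hermiteBasis s v i = 1 := by
  have hcard := hs.card_pos
  refine sub_eq_zero.mp
    (eq_zero_of_natDegree_lt_of_eval_eq_zero_of_eval_derivative_eq_zero hvs ?_ ?_ ?_)
  · refine (natDegree_sub_le _ _).trans_lt (max_lt ?_ (by rw [natDegree_one]; omega))
    exact (natDegree_sum_le_of_forall_le s _ fun i hi =>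
      Nat.le_sub_one_of_lt (natDegree_hermiteBasis_lt hi)).trans_lt (by omega)
  · intro j hj
    rw [eval_sub, eval_finsetSum,
      sum_eq_single_of_mem j hj fun i _ hij => eval_hermiteBasis_of_ne hij hj,
      eval_hermiteBasis_self hvs hj, eval_one, sub_self]
  · intro j hj
    rw [derivative_sub, derivative_sum, derivative_one, sub_zero, eval_finsetSum,
      sum_eq_single_of_mem j hj fun i _ hij => eval_derivative_hermiteBasis_of_ne hij hj,
      eval_derivative_hermiteBasis_self hvs hj]

theorem eval_hermiteBasis_not_at_node {x : F} (hi : i ∈ s) (hx : x ≠ v i) :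
    eval x (hermiteBasis s v i) = eval x (nodal s v) ^ 2 * (nodalWeight s v i ^ 2 *
      ((x - v i)⁻¹ ^ 2 - 2 * (∑ j ∈ s.erase i, (v i - v j)⁻¹) * (x - v i)⁻¹)) := by
  have hxi : x - v i ≠ 0 := sub_ne_zero.mpr hx
  simp only [hermiteBasis, nodal_eq_mul_nodal_erase hi, eval_mul, eval_pow, eval_C, eval_sub,
    eval_one, eval_X]
  field_simp

theorem one_div_eval_nodal_sq_eq_sum (hvs : Set.InjOn v s) (hs : s.Nonempty) {x : F}
    (hx : ∀ i ∈ s, x ≠ v i) :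
    1 / eval x (nodal s v) ^ 2 =
      ∑ i ∈ s, -2 * nodalWeight s v i ^ 2 * (∑ j ∈ s.erase i, (v i - v j)⁻¹) / (x - v i) +
        ∑ i ∈ s, nodalWeight s v i ^ 2 / (x - v i) ^ 2 := by
  have h := congrArg (eval x) (sum_hermiteBasis hvs hs)
  rw [eval_finsetSum, sum_congr rfl fun i hi => eval_hermiteBasis_not_at_node hi (hx i hi),
    ← mul_sum, eval_one] at h
  rw [← eq_one_div_of_mul_eq_one_right h, ← sum_add_distrib]
  refine sum_congr rfl fun i _ => ?_
  rw [div_eq_mul_inv, div_eq_mul_inv, ← inv_pow]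
  ring

end Lagrange

theorem Finset.prod_erase_range_succ_sub {M R : Type*} [CommMonoid M] [CommRing R] (g : R → M)
    {n k : ℕ} (hk : k ≤ n) :
    ∏ j ∈ (range (n + 1)).erase k, g (j - k) =
      (∏ i ∈ range k, g (-(i + 1))) * ∏ i ∈ range (n - k), g (i + 1) := by
  have hsplit : (range (n + 1)).erase k = range k ∪ Ico (k + 1) (n + 1) := by
    ext j
    simp only [mem_erase, mem_range, mem_union, mem_Ico]
    omega
  have hdisj : Disjoint (range k) (Ico (k + 1) (n + 1)) :=
    disjoint_left.mpr fun j hj hj' => by simp only [mem_range, mem_Ico] at hj hj'; omega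
  rw [hsplit, prod_union hdisj, ← prod_range_reflect, prod_Ico_eq_prod_range,
    show n + 1 - (k + 1) = n - k by omega]
  congr 1 <;> refine prod_congr rfl fun i hi => congrArg g ?_
  · have hik := mem_range.mp hi
    rw [show k - 1 - i = k - (i + 1) by omega, Nat.cast_sub hik]
    push_cast
    ring
  · push_cast
    ring

theorem Finset.sum_erase_range_succ_sub {M R : Type*} [AddCommMonoid M] [CommRing R] (g : R → M)
    {n k : ℕ} (hk : k ≤ n) :
    ∑ j ∈ (range (n + 1)).erase k, g (j - k) =
      (∑ i ∈ range k, g (-(i + 1))) + ∑ i ∈ range (n - k), g (i + 1) :=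
  Finset.prod_erase_range_succ_sub (M := Multiplicative M) g hk

theorem cast_factorial_eq_prod_range {R : Type*} [CommSemiring R] (m : ℕ) :
    (m.factorial : R) = ∏ i ∈ range m, ((i : R) + 1) := by
  rw [← prod_range_add_one_eq_factorial]
  push_cast
  rfl

theorem cast_harmonic_eq_sum_range {K : Type*} [Field K] [CharZero K] (m : ℕ) :
    (harmonic m : K) = ∑ i ∈ range m, ((i : K) + 1)⁻¹ := by
  simp [harmonic]

theorem sum_erase_range_sub_inv_eq_harmonic_sub {K : Type*} [Field K] [CharZero K] {n k : ℕ}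
    (hk : k ≤ n) :
    ∑ j ∈ (range (n + 1)).erase k, ((j : K) - k)⁻¹ = harmonic (n - k) - harmonic k := by
  rw [sum_erase_range_succ_sub (fun r : K => r⁻¹) hk, cast_harmonic_eq_sum_range,
    cast_harmonic_eq_sum_range]
  simp only [inv_neg, sum_neg_distrib]
  ring

theorem Lagrange.nodalWeight_range_neg_natCast_sq {K : Type*} [Field K] {n k : ℕ} (hk : k ≤ n) :
    nodalWeight (range (n + 1)) (fun j : ℕ => -(j : K)) k ^ 2 =
      1 / ((k.factorial * (n - k).factorial : K)) ^ 2 := by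
  rw [nodalWeight, ← prod_pow]
  simp only [neg_sub_neg]
  rw [prod_erase_range_succ_sub (fun r : K => r⁻¹ ^ 2) hk, cast_factorial_eq_prod_range,
    cast_factorial_eq_prod_range]
  simp only [inv_pow, neg_sq, prod_inv_distrib, prod_pow]
  field_simp

theorem partial_fraction_sq_reciprocal_risingFactorial_general (n : ℕ) (x : ℝ)
    (hx : ∀ k ≤ n, x + (k : ℝ) ≠ 0) :
    1 / (∏ k ∈ Finset.range (n + 1), (x + k)) ^ 2 =
      (∑ k ∈ Finset.range (n + 1),
        (2 * ((harmonic k : ℝ) - (harmonic (n - k) : ℝ)) /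
          ((k.factorial * (n - k).factorial : ℝ)) ^ 2) / (x + k)) +
      ∑ k ∈ Finset.range (n + 1),
        (1 / ((k.factorial * (n - k).factorial : ℝ)) ^ 2) / (x + k) ^ 2 := by
  have hinj : Set.InjOn (fun k : ℕ => -(k : ℝ)) (range (n + 1)) :=
    fun a _ b _ h => by simpa using h
  have hnode : ∀ k ∈ range (n + 1), x ≠ -(k : ℝ) := fun k hk h =>
    hx k (Nat.lt_succ_iff.mp (mem_range.mp hk)) (by rw [h]; ring)
  have key := Lagrange.one_div_eval_nodal_sq_eq_sum hinj nonempty_range_add_one hnode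
  -- `neg_sub_neg` first, so that `-k - -j` becomes `j - k` rather than `-k + j`
  simp only [Lagrange.eval_nodal, neg_sub_neg] at key
  simp only [sub_neg_eq_add] at key
  rw [key]
  congr 1 <;> refine sum_congr rfl fun k hk => ?_
  · have hkn := Nat.lt_succ_iff.mp (mem_range.mp hk)
    rw [Lagrange.nodalWeight_range_neg_natCast_sq hkn, sum_erase_range_sub_inv_eq_harmonic_sub hkn]
    ring
  · rw [Lagrange.nodalWeight_range_neg_natCast_sq (Nat.lt_succ_iff.mp (mem_range.mp hk))]

theorem partial_fraction_sq_reciprocal_risingFactorial (n : ℕ) (hn : 1 ≤ n) (x : ℝ)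
    (hx : ∀ k ≤ n, x + (k : ℝ) ≠ 0) :
    1 / (∏ k ∈ Finset.range (n + 1), (x + k)) ^ 2 =
      (∑ k ∈ Finset.range (n + 1),
        (2 * ((harmonic k : ℝ) - (harmonic (n - k) : ℝ)) /
          ((k.factorial * (n - k).factorial : ℝ)) ^ 2) / (x + k)) +
      ∑ k ∈ Finset.range (n + 1),
        (1 / ((k.factorial * (n - k).factorial : ℝ)) ^ 2) / (x + k) ^ 2 :=
  partial_fraction_sq_reciprocal_risingFactorial_general n x hx
end

section
/- For every natural number n ≥ 1, ∑_{j=0}^{n} C(n,j)^2 · ((H_{n-j} - H_j)(2j - n) + 1) = 0. -/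
/-!
With `G j = C(n,j)² (j² (H_j - H_{n-j}) - j)`, the `j`-th summand multiplied by `n` equals
`G (j+1) - G j` (a consequence of `(j+1) C(n,j+1) = (n-j) C(n,j)` and `H_{m+1} = H_m + 1/(m+1)`),
so `n` times the sum telescopes to `G (n+1) - G 0 = 0`.
-/

open Finset

noncomputable def sqChooseHarmonicSummand (n j : ℕ) : ℝ :=
  (n.choose j : ℝ) ^ 2 * (((harmonic (n - j) : ℝ) - (harmonic j : ℝ)) * (2 * j - n) + 1)

noncomputable def sqChooseHarmonicPrimitive (n j : ℕ) : ℝ :=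
  (n.choose j : ℝ) ^ 2 * ((j : ℝ) ^ 2 * ((harmonic j : ℝ) - (harmonic (n - j) : ℝ)) - j)

lemma harmonic_succ_real (m : ℕ) :
    (harmonic (m + 1) : ℝ) = harmonic m + 1 / ((m : ℝ) + 1) := by
  rw [harmonic_succ]; push_cast; ring

lemma sqChooseHarmonicPrimitive_zero (n : ℕ) : sqChooseHarmonicPrimitive n 0 = 0 := by
  simp [sqChooseHarmonicPrimitive]

lemma sqChooseHarmonicPrimitive_succ_self (n : ℕ) :
    sqChooseHarmonicPrimitive n (n + 1) = 0 := by
  simp [sqChooseHarmonicPrimitive]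

lemma sqChooseHarmonicPrimitive_succ_sub_of_lt (j k : ℕ) :
    sqChooseHarmonicPrimitive (j + k + 1) (j + 1) - sqChooseHarmonicPrimitive (j + k + 1) j =
      (j + k + 1 : ℕ) * sqChooseHarmonicSummand (j + k + 1) j := by
  have hchoose : ((j + k + 1).choose (j + 1) : ℝ) * (j + 1) = (j + k + 1).choose j * (k + 1) := by
    have := Nat.choose_succ_right_eq (j + k + 1) j
    rw [show j + k + 1 - j = k + 1 by omega] at this
    exact_mod_cast this
  have hc : ((j + k + 1).choose (j + 1) : ℝ) = (j + k + 1).choose j * (k + 1) / (j + 1) := by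
    rw [eq_div_iff (by positivity), hchoose]
  simp only [sqChooseHarmonicPrimitive, sqChooseHarmonicSummand,
    show j + k + 1 - (j + 1) = k by omega, show j + k + 1 - j = k + 1 by omega,
    hc, harmonic_succ_real]
  push_cast
  field_simp
  ring

lemma sqChooseHarmonicPrimitive_succ_self_sub (n : ℕ) :
    sqChooseHarmonicPrimitive n (n + 1) - sqChooseHarmonicPrimitive n n =
      n * sqChooseHarmonicSummand n n := by
  rw [sqChooseHarmonicPrimitive_succ_self]
  simp only [sqChooseHarmonicPrimitive, sqChooseHarmonicSummand, Nat.choose_self, Nat.sub_self,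
    harmonic_zero]
  push_cast
  ring

lemma sqChooseHarmonicPrimitive_succ_sub {n j : ℕ} (hj : j ≤ n) :
    sqChooseHarmonicPrimitive n (j + 1) - sqChooseHarmonicPrimitive n j =
      n * sqChooseHarmonicSummand n j := by
  obtain rfl | hlt := hj.eq_or_lt
  · exact sqChooseHarmonicPrimitive_succ_self_sub j
  · obtain ⟨k, rfl⟩ : ∃ k, n = j + k + 1 := ⟨n - j - 1, by omega⟩
    exact sqChooseHarmonicPrimitive_succ_sub_of_lt j k

lemma mul_sum_sqChooseHarmonicSummand (n : ℕ) :
    n * ∑ j ∈ range (n + 1), sqChooseHarmonicSummand n j = 0 := by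
  rw [mul_sum, ← sum_congr rfl fun j hj =>
      sqChooseHarmonicPrimitive_succ_sub (Nat.lt_succ_iff.mp (mem_range.mp hj)),
    sum_range_sub, sqChooseHarmonicPrimitive_succ_self, sqChooseHarmonicPrimitive_zero, sub_zero]

theorem sum_sq_choose_harmonic_identity (n : ℕ) (hn : 1 ≤ n) :
    ∑ j ∈ Finset.range (n + 1),
      (n.choose j : ℝ) ^ 2 *
        (((harmonic (n - j) : ℝ) - (harmonic j : ℝ)) * (2 * j - n) + 1) = 0 :=
  (mul_eq_zero.mp (mul_sum_sqChooseHarmonicSummand n)).resolve_left (by positivity)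
end

section
/- For every natural number n ≥ 1, ∑_{j=0}^{n} C(n,j)^2 · (2j(H_{n-j} - H_j) + 1) = 0. -/
/-!
Pairing `j` with `n - j` shows `∑ C(n,j)² (H_{n-j} - H_j) = 0`, so the weight `2j` may be
replaced by `2j - n`. The partial sums of `(2j - n) C(n,j)²` telescope to `-n C(n-1,j)²`, and
`H_{n-j} - H_j` drops by `1/(n-j) + 1/(j+1)` from `j` to `j + 1`. Summation by parts therefore
turns the harmonic part into `-∑ C(n-1,j) C(n+1,j+1) = -C(2n,n)` (Vandermonde), which cancels
`∑ C(n,j)² = C(2n,n)`.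
-/

open Finset

lemma cast_choose_succ_mul (n k : ℕ) :
    (n.choose (k + 1) : ℝ) * (k + 1) = n.choose k * (n - k) := by
  rcases le_or_gt k n with hkn | hnk
  · rw [← Nat.cast_sub hkn]
    exact_mod_cast Nat.choose_succ_right_eq n k
  · simp [Nat.choose_eq_zero_of_lt hnk, Nat.choose_eq_zero_of_lt (hnk.trans (Nat.lt_succ_self k))]

lemma sum_range_two_mul_sub_mul_choose_sq (n k : ℕ) :
    ∑ j ∈ range (k + 1), (2 * (j : ℝ) - (n + 1)) * ((n + 1).choose j : ℝ) ^ 2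
      = -(n + 1) * (n.choose k : ℝ) ^ 2 := by
  induction k with
  | zero => simp
  | succ k ih =>
    rw [sum_range_succ, ih, Nat.choose_succ_succ']
    push_cast
    linear_combination 2 * ((n.choose k : ℝ) + n.choose (k + 1)) * cast_choose_succ_mul n k

lemma sum_range_choose_sq_mul_harmonic_sub (n : ℕ) :
    ∑ j ∈ range (n + 1), (n.choose j : ℝ) ^ 2 * ((harmonic (n - j) : ℝ) - harmonic j) = 0 := by
  set f : ℕ → ℝ := fun j ↦ (n.choose j : ℝ) ^ 2 * ((harmonic (n - j) : ℝ) - harmonic j)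
  have hanti : ∀ j ∈ range (n + 1), f (n + 1 - 1 - j) = -f j := fun j hj ↦ by
    have hjn : j ≤ n := Nat.lt_succ_iff.mp (mem_range.mp hj)
    simp only [f, Nat.add_sub_cancel, Nat.choose_symm hjn, Nat.sub_sub_self hjn]
    ring
  have hreflect := sum_range_reflect f (n + 1)
  rw [sum_congr rfl hanti, sum_neg_distrib] at hreflect
  linarith

lemma harmonic_sub_harmonic_step (i k : ℕ) :
    ((harmonic k : ℝ) - harmonic (i + 1)) - ((harmonic (k + 1) : ℝ) - harmonic i)
      = -(((k : ℝ) + 1)⁻¹ + ((i : ℝ) + 1)⁻¹) := by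
  simp only [harmonic_succ]
  push_cast
  ring

lemma add_one_mul_choose_mul_inv_add_inv (i k : ℕ) :
    ((i + k : ℝ) + 1) * (i + k).choose i * (((k : ℝ) + 1)⁻¹ + ((i : ℝ) + 1)⁻¹)
      = (i + k + 2).choose (i + 1) := by
  have hleft : ((i + k : ℝ) + 1) * (i + k).choose i = (i + k + 1).choose (i + 1) * (i + 1) := by
    exact_mod_cast Nat.add_one_mul_choose_eq (i + k) i
  have hright : ((i + k : ℝ) + 1) * (i + k).choose i = (i + k + 1).choose i * (k + 1) := by
    have := Nat.choose_mul_succ_eq (i + k) i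
    rw [show i + k + 1 - i = k + 1 by omega] at this
    exact_mod_cast (mul_comm _ _).trans this
  rw [Nat.choose_succ_succ', Nat.cast_add]
  field_simp
  linear_combination ((k : ℝ) + 1) * hleft + ((i : ℝ) + 1) * hright

lemma sum_range_choose_mul_choose_add_two (m : ℕ) :
    ∑ i ∈ range (m + 1), m.choose i * (m + 2).choose (i + 1) = (2 * (m + 1)).choose (m + 1) := by
  rw [show 2 * (m + 1) = m + (m + 2) by ring, Nat.add_choose_eq,
    Nat.sum_antidiagonal_eq_sum_range_succ_mk, sum_range_succ _ (m + 1), Nat.choose_succ_self,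
    zero_mul, add_zero]
  refine sum_congr rfl fun i hi ↦ ?_
  rw [Nat.choose_symm_of_eq_add (by have := mem_range.mp hi; omega : m + 2 = i + 1 + (m + 1 - i))]

lemma sum_range_two_mul_sub_mul_choose_sq_mul_harmonic_sub (m : ℕ) :
    ∑ j ∈ range (m + 2), (2 * (j : ℝ) - (m + 1)) * ((m + 1).choose j : ℝ) ^ 2 *
        ((harmonic (m + 1 - j) : ℝ) - harmonic j)
      = -∑ i ∈ range (m + 1), (m.choose i : ℝ) * (m + 2).choose (i + 1) := by
  set d : ℕ → ℝ := fun j ↦ (harmonic (m + 1 - j) : ℝ) - harmonic j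
  have hparts := sum_range_by_parts d
    (fun j ↦ (2 * (j : ℝ) - (m + 1)) * ((m + 1).choose j : ℝ) ^ 2) (m + 2)
  simp only [smul_eq_mul, sum_range_two_mul_sub_mul_choose_sq, Nat.choose_succ_self,
    Nat.cast_zero, zero_pow two_ne_zero, mul_zero, zero_sub] at hparts
  calc _ = ∑ j ∈ range (m + 2), d j * ((2 * (j : ℝ) - (m + 1)) * ((m + 1).choose j : ℝ) ^ 2) :=
        sum_congr rfl fun j _ ↦ by ring
    _ = -∑ i ∈ range (m + 1), (d (i + 1) - d i) * (-(m + 1) * (m.choose i : ℝ) ^ 2) := hparts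
    _ = _ := by
      refine congrArg Neg.neg (sum_congr rfl fun i hi ↦ ?_)
      obtain ⟨k, rfl⟩ : ∃ k, m = i + k := ⟨m - i, by have := mem_range.mp hi; omega⟩
      simp only [d, show i + k + 1 - (i + 1) = k by omega, show i + k + 1 - i = k + 1 by omega,
        harmonic_sub_harmonic_step]
      rw [← add_one_mul_choose_mul_inv_add_inv]
      push_cast
      ring

theorem sum_sq_choose_harmonic_identity' (n : ℕ) (hn : 1 ≤ n) :
    ∑ j ∈ Finset.range (n + 1),
      (n.choose j : ℝ) ^ 2 *
        (2 * j * ((harmonic (n - j) : ℝ) - (harmonic j : ℝ)) + 1) = 0 := by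
  obtain ⟨m, rfl⟩ : ∃ m, n = m + 1 := ⟨n - 1, by omega⟩
  have hsq : ∑ j ∈ range (m + 2), ((m + 1).choose j : ℝ) ^ 2 = (2 * (m + 1)).choose (m + 1) := by
    exact_mod_cast Nat.sum_range_choose_sq (m + 1)
  have hvandermonde : ∑ i ∈ range (m + 1), (m.choose i : ℝ) * (m + 2).choose (i + 1)
      = (2 * (m + 1)).choose (m + 1) := by
    exact_mod_cast sum_range_choose_mul_choose_add_two m
  calc _ = ∑ j ∈ range (m + 2), ((m + 1).choose j : ℝ) ^ 2
        + ∑ j ∈ range (m + 2), (2 * (j : ℝ) - (m + 1)) * ((m + 1).choose j : ℝ) ^ 2 *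
            ((harmonic (m + 1 - j) : ℝ) - harmonic j)
        + (m + 1) * ∑ j ∈ range (m + 2), ((m + 1).choose j : ℝ) ^ 2 *
            ((harmonic (m + 1 - j) : ℝ) - harmonic j) := by
        rw [mul_sum, ← sum_add_distrib, ← sum_add_distrib]
        exact sum_congr rfl fun j _ ↦ by ring
    _ = 0 := by
      rw [hsq, sum_range_two_mul_sub_mul_choose_sq_mul_harmonic_sub, hvandermonde,
        sum_range_choose_sq_mul_harmonic_sub]
      ring
end

section
/- Euler's constant admits the double integral representation γ = ∫_0^1 ∫_0^1 (1-x)/((1-xy)(-log(xy))) dx dy. -/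
/-!
For `0 < z < 1` we have `1 / ((1 - z) * -log z) = ∑ₙ ∫₀^∞ z ^ (n + t) dt`, by the geometric series
and `∫₀^∞ z ^ t dt = 1 / -log z`. With `z = x * y` the integrals over `x` and `y` become
elementary, and by Tonelli the `n`-th term of the double integral is
`∫₀^∞ dt / ((n + 1 + t) ^ 2 * (n + 2 + t)) = 1 / (n + 1) - log ((n + 2) / (n + 1))`,
the increment of `H_n - log (n + 1)`. These increments telescope to `γ`.
Everything is computed with `ℝ≥0∞`-valued integrals, where Tonelli needs no integrability.
-/

open Real MeasureTheory Set Filter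
open scoped ENNReal

lemma Real.eulerMascheroniSeq_succ_sub (n : ℕ) :
    eulerMascheroniSeq (n + 1) - eulerMascheroniSeq n
      = 1 / (n + 1) - (log (n + 1 + 1) - log (n + 1)) := by
  simp only [eulerMascheroniSeq, harmonic_succ]
  push_cast
  ring

lemma Real.eulerMascheroniSeq_succ_sub_nonneg (n : ℕ) :
    0 ≤ eulerMascheroniSeq (n + 1) - eulerMascheroniSeq n :=
  sub_nonneg.2 (strictMono_eulerMascheroniSeq.monotone n.le_succ)

lemma Real.hasSum_eulerMascheroniSeq_succ_sub :
    HasSum (fun n ↦ eulerMascheroniSeq (n + 1) - eulerMascheroniSeq n)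
      eulerMascheroniConstant := by
  refine (hasSum_iff_tendsto_nat_of_nonneg eulerMascheroniSeq_succ_sub_nonneg _).2 ?_
  simpa only [Finset.sum_range_sub, eulerMascheroniSeq_zero, sub_zero]
    using tendsto_eulerMascheroniSeq

lemma mul_mem_Ioo_zero_one {x y : ℝ} (hx : x ∈ Ioo (0 : ℝ) 1) (hy : y ∈ Ioo (0 : ℝ) 1) :
    x * y ∈ Ioo (0 : ℝ) 1 :=
  ⟨mul_pos hx.1 hy.1, mul_lt_one_of_nonneg_of_lt_one_left hx.1.le hx.2 hy.2.le⟩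

lemma lintegral_Ioi_const_rpow {z : ℝ} (h0 : 0 < z) (h1 : z < 1) :
    ∫⁻ t in Ioi (0 : ℝ), ENNReal.ofReal (z ^ t) = ENNReal.ofReal (1 / -log z) := by
  have hlog : log z < 0 := log_neg h0 h1
  simp_rw [rpow_def_of_pos h0]
  rw [← ofReal_integral_eq_lintegral_ofReal (integrableOn_exp_mul_Ioi hlog 0)
    (Eventually.of_forall fun _ ↦ (exp_pos _).le), integral_exp_mul_Ioi hlog 0]
  simp [div_neg, neg_div]

lemma integral_Ioo_rpow {c : ℝ} (hc : -1 < c) : ∫ x in Ioo (0 : ℝ) 1, x ^ c = 1 / (c + 1) := by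
  rw [← integral_Ioc_eq_integral_Ioo, ← intervalIntegral.integral_of_le zero_le_one,
    integral_rpow (Or.inl hc), one_rpow, zero_rpow (by linarith), sub_zero, one_div]

lemma lintegral_Ioo_rpow {c : ℝ} (hc : -1 < c) :
    ∫⁻ x in Ioo (0 : ℝ) 1, ENNReal.ofReal (x ^ c) = ENNReal.ofReal (1 / (c + 1)) := by
  rw [← integral_Ioo_rpow hc, ofReal_integral_eq_lintegral_ofReal
    ((intervalIntegral.integrableOn_Ioo_rpow_iff one_pos).2 hc)
    (ae_restrict_of_forall_mem measurableSet_Ioo fun x hx ↦ rpow_nonneg hx.1.le c)]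

lemma lintegral_Ioo_one_sub_mul_rpow {c : ℝ} (hc : -1 < c) :
    ∫⁻ x in Ioo (0 : ℝ) 1, ENNReal.ofReal ((1 - x) * x ^ c)
      = ENNReal.ofReal (1 / (c + 1) - 1 / (c + 2)) := by
  have hint : ∀ d : ℝ, -1 < d → IntegrableOn (fun x : ℝ ↦ x ^ d) (Ioo 0 1) :=
    fun d hd ↦ (intervalIntegral.integrableOn_Ioo_rpow_iff one_pos).2 hd
  have hsplit : EqOn (fun x : ℝ ↦ (1 - x) * x ^ c) (fun x ↦ x ^ c - x ^ (c + 1)) (Ioo 0 1) :=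
    fun x hx ↦ by simp only [rpow_add hx.1, rpow_one]; ring
  rw [← ofReal_integral_eq_lintegral_ofReal
    ((integrableOn_congr_fun hsplit measurableSet_Ioo).2 ((hint c hc).sub (hint _ (by linarith))))
    (ae_restrict_of_forall_mem measurableSet_Ioo fun x hx ↦
      mul_nonneg (sub_nonneg.2 hx.2.le) (rpow_nonneg hx.1.le c)),
    setIntegral_congr_fun measurableSet_Ioo hsplit, integral_sub (hint c hc)
      (hint _ (by linarith)), integral_Ioo_rpow hc, integral_Ioo_rpow (by linarith)]
  ring_nf

lemma lintegral_Ioi_one_div_sq_mul_add_one {c : ℝ} (hc : 0 < c) :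
    ∫⁻ t in Ioi (0 : ℝ), ENNReal.ofReal (1 / ((c + t) ^ 2 * (c + t + 1)))
      = ENNReal.ofReal (1 / c - (log (c + 1) - log c)) := by
  set G : ℝ → ℝ := fun t ↦ log (c + t + 1) - log (c + t) - (c + t)⁻¹
  have hderiv : ∀ t ∈ Ici (0 : ℝ), HasDerivAt G (1 / ((c + t) ^ 2 * (c + t + 1))) t := by
    intro t ht
    have hpos : 0 < c + t := by linarith [mem_Ici.1 ht]
    have hlin : HasDerivAt (fun t ↦ c + t) 1 t := (hasDerivAt_id t).const_add c
    refine ((((hlin.add_const 1).log (by linarith)).sub (hlin.log hpos.ne')).sub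
      (hlin.inv hpos.ne')).congr_deriv ?_
    field_simp
    ring
  have hnonneg : ∀ t ∈ Ioi (0 : ℝ), 0 ≤ 1 / ((c + t) ^ 2 * (c + t + 1)) := by
    intro t ht
    have : 0 < c + t := by linarith [mem_Ioi.1 ht]
    positivity
  have hlim : Tendsto G atTop (nhds 0) := by
    have hu : Tendsto (fun t : ℝ ↦ c + t) atTop atTop :=
      tendsto_atTop_add_const_left _ c tendsto_id
    simpa using ((tendsto_log_comp_add_sub_log 1).comp hu).sub (tendsto_inv_atTop_zero.comp hu)
  rw [← ofReal_integral_eq_lintegral_ofReal (integrableOn_Ioi_deriv_of_nonneg' hderiv hnonneg hlim)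
    (ae_restrict_of_forall_mem measurableSet_Ioi hnonneg),
    integral_Ioi_of_hasDerivAt_of_nonneg' hderiv hnonneg hlim]
  simp only [G, add_zero]
  ring_nf

section Tonelli

variable {α β γ : Type*} [MeasurableSpace α] [MeasurableSpace β] [MeasurableSpace γ]
  {μ : Measure α} {ν : Measure β} [SFinite μ] [SFinite ν]

lemma lintegral_lintegral_lintegral_mul_swap {ρ : Measure γ} [SFinite ρ]
    {f : α → γ → ℝ≥0∞} {g : β → γ → ℝ≥0∞}
    (hf : Measurable (Function.uncurry f)) (hg : Measurable (Function.uncurry g)) :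
    ∫⁻ y, ∫⁻ x, ∫⁻ t, f x t * g y t ∂ρ ∂μ ∂ν = ∫⁻ t, (∫⁻ x, f x t ∂μ) * ∫⁻ y, g y t ∂ν ∂ρ := by
  calc ∫⁻ y, ∫⁻ x, ∫⁻ t, f x t * g y t ∂ρ ∂μ ∂ν
      = ∫⁻ y, ∫⁻ t, (∫⁻ x, f x t ∂μ) * g y t ∂ρ ∂ν := by
        refine lintegral_congr fun y ↦ ?_
        rw [lintegral_lintegral_swap (by fun_prop)]
        exact lintegral_congr fun t ↦ lintegral_mul_const _ (hf.comp measurable_prodMk_right)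
    _ = ∫⁻ t, ∫⁻ y, (∫⁻ x, f x t ∂μ) * g y t ∂ν ∂ρ := lintegral_lintegral_swap (by fun_prop)
    _ = ∫⁻ t, (∫⁻ x, f x t ∂μ) * ∫⁻ y, g y t ∂ν ∂ρ :=
        lintegral_congr fun t ↦ lintegral_const_mul _ (hg.comp measurable_prodMk_right)

lemma integral_integral_eq_toReal_lintegral_lintegral {f : α → β → ℝ}
    (hf : AEStronglyMeasurable (Function.uncurry f) (μ.prod ν))
    (hnonneg : 0 ≤ᵐ[μ.prod ν] Function.uncurry f)
    (hfin : ∫⁻ x, ∫⁻ y, ENNReal.ofReal (f x y) ∂ν ∂μ ≠ ∞) :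
    ∫ x, ∫ y, f x y ∂ν ∂μ = (∫⁻ x, ∫⁻ y, ENNReal.ofReal (f x y) ∂ν ∂μ).toReal := by
  have hprod : ∫⁻ z, ENNReal.ofReal (Function.uncurry f z) ∂μ.prod ν
      = ∫⁻ x, ∫⁻ y, ENNReal.ofReal (f x y) ∂ν ∂μ :=
    lintegral_prod _ hf.aemeasurable.ennreal_ofReal
  rw [integral_integral ((lintegral_ofReal_ne_top_iff_integrable hf hnonneg).1 (hprod ▸ hfin)),
    ← hprod]
  exact integral_eq_lintegral_of_nonneg_ae hnonneg hf

end Tonelli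

lemma ofReal_one_div_one_sub_mul_neg_log_eq_tsum_lintegral {z : ℝ} (h0 : 0 < z) (h1 : z < 1) :
    ENNReal.ofReal (1 / ((1 - z) * -log z))
      = ∑' n : ℕ, ∫⁻ t in Ioi (0 : ℝ), ENNReal.ofReal (z ^ ((n : ℝ) + t)) := by
  have hlog : 0 < -log z := neg_pos.2 (log_neg h0 h1)
  calc ENNReal.ofReal (1 / ((1 - z) * -log z))
      = ENNReal.ofReal (∑' n : ℕ, z ^ n) * ENNReal.ofReal (1 / -log z) := by
        rw [tsum_geometric_of_lt_one h0.le h1,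
          ← ENNReal.ofReal_mul (inv_nonneg.2 (sub_nonneg.2 h1.le))]
        congr 1
        field_simp
    _ = ∑' n : ℕ, ENNReal.ofReal (z ^ n) * ∫⁻ t in Ioi (0 : ℝ), ENNReal.ofReal (z ^ t) := by
        rw [ENNReal.ofReal_tsum_of_nonneg (fun n ↦ pow_nonneg h0.le n)
          (summable_geometric_of_lt_one h0.le h1), ENNReal.tsum_mul_right,
          lintegral_Ioi_const_rpow h0 h1]
    _ = ∑' n : ℕ, ∫⁻ t in Ioi (0 : ℝ), ENNReal.ofReal (z ^ ((n : ℝ) + t)) := by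
        refine tsum_congr fun n ↦ ?_
        rw [← lintegral_const_mul' _ _ ENNReal.ofReal_ne_top]
        refine lintegral_congr fun t ↦ ?_
        rw [rpow_add h0, rpow_natCast, ENNReal.ofReal_mul (pow_nonneg h0.le n)]

lemma ofReal_one_sub_div_one_sub_mul_neg_log_eq_tsum_lintegral {x y : ℝ}
    (hx : x ∈ Ioo (0 : ℝ) 1) (hy : y ∈ Ioo (0 : ℝ) 1) :
    ENNReal.ofReal ((1 - x) / ((1 - x * y) * -log (x * y)))
      = ∑' n : ℕ, ∫⁻ t in Ioi (0 : ℝ),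
          ENNReal.ofReal ((1 - x) * x ^ ((n : ℝ) + t)) * ENNReal.ofReal (y ^ ((n : ℝ) + t)) := by
  have hxy := mul_mem_Ioo_zero_one hx hy
  have h1x : 0 ≤ 1 - x := sub_nonneg.2 hx.2.le
  rw [div_eq_mul_one_div, ENNReal.ofReal_mul h1x,
    ofReal_one_div_one_sub_mul_neg_log_eq_tsum_lintegral hxy.1 hxy.2, ← ENNReal.tsum_mul_left]
  refine tsum_congr fun n ↦ ?_
  rw [← lintegral_const_mul' _ _ ENNReal.ofReal_ne_top]
  refine lintegral_congr fun t ↦ ?_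
  rw [mul_rpow hx.1.le hy.1.le, ← ENNReal.ofReal_mul h1x,
    ← ENNReal.ofReal_mul (mul_nonneg h1x (rpow_nonneg hx.1.le _)), mul_assoc]

lemma lintegral_lintegral_lintegral_rpow_eq_eulerMascheroniSeq_succ_sub (n : ℕ) :
    ∫⁻ y in Ioo (0 : ℝ) 1, ∫⁻ x in Ioo (0 : ℝ) 1, ∫⁻ t in Ioi (0 : ℝ),
        ENNReal.ofReal ((1 - x) * x ^ ((n : ℝ) + t)) * ENNReal.ofReal (y ^ ((n : ℝ) + t))
      = ENNReal.ofReal (eulerMascheroniSeq (n + 1) - eulerMascheroniSeq n) := by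
  rw [lintegral_lintegral_lintegral_mul_swap (by fun_prop) (by fun_prop),
    eulerMascheroniSeq_succ_sub,
    ← lintegral_Ioi_one_div_sq_mul_add_one (c := n + 1) (by positivity)]
  refine setLIntegral_congr_fun measurableSet_Ioi fun t ht ↦ ?_
  have hs : 0 < (n : ℝ) + t + 1 := by linarith [mem_Ioi.1 ht, n.cast_nonneg (α := ℝ)]
  have hs' : 0 < (n : ℝ) + t + 2 := by linarith
  rw [lintegral_Ioo_one_sub_mul_rpow (by linarith), lintegral_Ioo_rpow (by linarith),
    ← ENNReal.ofReal_mul (sub_nonneg.2 (one_div_le_one_div_of_le hs (by linarith))),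
    show (n : ℝ) + 1 + t = n + t + 1 by ring]
  congr 1
  field_simp
  ring

lemma lintegral_lintegral_one_sub_div_eq_ofReal_eulerMascheroniConstant :
    ∫⁻ y in Ioo (0 : ℝ) 1, ∫⁻ x in Ioo (0 : ℝ) 1,
        ENNReal.ofReal ((1 - x) / ((1 - x * y) * -log (x * y)))
      = ENNReal.ofReal eulerMascheroniConstant := by
  rw [setLIntegral_congr_fun measurableSet_Ioo fun y hy ↦ setLIntegral_congr_fun measurableSet_Ioo
      fun x hx ↦ ofReal_one_sub_div_one_sub_mul_neg_log_eq_tsum_lintegral hx hy,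
    lintegral_congr fun y ↦ lintegral_tsum fun n ↦ by fun_prop, lintegral_tsum fun n ↦ by fun_prop]
  simp_rw [lintegral_lintegral_lintegral_rpow_eq_eulerMascheroniSeq_succ_sub]
  rw [← ENNReal.ofReal_tsum_of_nonneg eulerMascheroniSeq_succ_sub_nonneg
    hasSum_eulerMascheroniSeq_succ_sub.summable, hasSum_eulerMascheroniSeq_succ_sub.tsum_eq]

theorem eulerMascheroni_double_integral :
    Real.eulerMascheroniConstant =
      ∫ y in (0 : ℝ)..1, ∫ x in (0 : ℝ)..1,
        (1 - x) / ((1 - x * y) * (-Real.log (x * y))) := by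
  have hnonneg : ∀ y ∈ Ioo (0 : ℝ) 1, ∀ x ∈ Ioo (0 : ℝ) 1,
      0 ≤ (1 - x) / ((1 - x * y) * -log (x * y)) := fun y hy x hx ↦
    have hxy := mul_mem_Ioo_zero_one hx hy
    div_nonneg (sub_nonneg.2 hx.2.le)
      (mul_nonneg (sub_nonneg.2 hxy.2.le) (neg_nonneg.2 (log_nonpos hxy.1.le hxy.2.le)))
  have hvalue := lintegral_lintegral_one_sub_div_eq_ofReal_eulerMascheroniConstant
  simp only [intervalIntegral.integral_of_le zero_le_one, integral_Ioc_eq_integral_Ioo]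
  rw [integral_integral_eq_toReal_lintegral_lintegral
      (Measurable.aestronglyMeasurable (by fun_prop)) ?_ (hvalue ▸ ENNReal.ofReal_ne_top),
    hvalue, ENNReal.toReal_ofReal (by linarith [one_half_lt_eulerMascheroniConstant])]
  rw [Measure.prod_restrict]
  exact ae_restrict_of_forall_mem (measurableSet_Ioo.prod measurableSet_Ioo)
    fun p hp ↦ hnonneg p.1 hp.1 p.2 hp.2
end
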